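/- For any finite simply connected W ⊆ V containing D_k and any Λ ⊇ W, if t is a spanning tree of the wired graph G_Λ with desc_t(D_k) = W, then the restriction t_{W,k} of t to the edges of E*_{W,k} is a spanning tree of G*_{W,k}, and the restriction of η = φ_{D,Λ}^{−1}(t) to W determines t_{W,k} in a way independent of Λ; the resulting map η_W ↦ t_{W,k} is a bijection from R_{G*_{W,k}} to T_{G*_{W,k}}. -/
import Mathlib


open Finset
open scoped Classical

namespace Anchored

variable {V : Type*} [DecidableEq V]

/-- iterating a partial parent map; `none` represents the sink. -/
def iterP (p : V → Option V) : ℕ → V → Option V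
  | 0, v => some v
  | n + 1, v => (p v).bind (iterP p n)

/-- walks in the multigraph `a` avoiding the set `A` -/
def ReachAvoid (a : V → V → ℕ) (A : Finset V) (u v : V) : Prop :=
  ∃ (nn : ℕ) (f : ℕ → V), f 0 = u ∧ f nn = v ∧ (∀ j ≤ nn, f j ∉ A) ∧
    ∀ j < nn, 0 < a (f j) (f (j + 1))

/-- oriented edges (with multiplicity index) from `v` into the finite set `T` -/
def edgesTo (a : V → V → ℕ) (v : V) (T : Finset V) : Finset (V × ℕ) :=
  T.biUnion fun w => (Finset.range (a v w)).image fun i => (w, i)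

variable (a : V → V → ℕ) (S : Finset V) (out : V → Finset V)

/-- number of edges from `v` to the sink of the wired graph on `S`;
`out v` is the set of heads of sink edges at `v` (actual vertices of `G`). -/
def sk (v : V) : ℕ := ∑ w ∈ out v, a v w

/-- degree of `v` in the wired graph on `S` -/
def degS (v : V) : ℕ := sk a out v + ∑ w ∈ S, a v w

variable (η : V → ℕ) (D : ℕ → Finset V) (kk : ℕ)

/-- number of global steps allotted to each phase of the anchored burning -/
def plen : ℕ := S.card + 1

/-- Flattened anchored burning process: `U m` is the set of unburnt vertices
after `m` global steps; phase `i` (for `i = 1, …, kk + 1`) occupies the steps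
`m ∈ [(i-1)·plen, i·plen)` and forbids burning the vertices of `D (kk - i + 1)`.
A vertex burns when its height is at least its number of edges to unburnt
vertices (the sink being burnt at time `0`). -/
def U : ℕ → Finset V
  | 0 => S
  | m + 1 => (U m).filter fun v =>
      v ∈ D (kk - m / plen S) ∨ η v < ∑ w ∈ U m, a v w

/-- the (anchored) burning time of `v` -/
noncomputable def τ (v : V) : ℕ := sInf {m | v ∉ U a S η D kk m}

/-- number of oriented edges from `v` whose head was burnt strictly before `v`
(including the sink edges) -/
noncomputable def mv (v : V) : ℕ :=
  sk a out v + ∑ w ∈ S \ U a S η D kk (τ a S η D kk v - 1), a v w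

/-- the set of candidate tree edges at `v`: the oriented edges from `v` to the
layer burnt at the previous step (at the first step of a phase: to everything
burnt in earlier phases, including the sink) -/
noncomputable def Fv (v : V) : Finset (V × ℕ) :=
  if (τ a S η D kk v - 1) % plen S = 0 then
    edgesTo a v (out v) ∪ edgesTo a v (S \ U a S η D kk (τ a S η D kk v - 1))
  else
    edgesTo a v
      (U a S η D kk (τ a S η D kk v - 2) \ U a S η D kk (τ a S η D kk v - 1))

/-- `Spec … prec e` says that `e` encodes the spanning tree assigned to `η` by
the anchored burning bijection: each `v ∈ S` gets the edge of `F_v` having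
exactly `ℓ` predecessors in the ordering `prec v`, where
`η v = deg v - m_v + ℓ`. -/
def Spec (prec : V → (V × ℕ) → (V × ℕ) → Prop) (e : V → Option (V × ℕ)) : Prop :=
  (∀ v ∉ S, e v = none) ∧
  ∀ v ∈ S, ∃ ed : V × ℕ, e v = some ed ∧ ed ∈ Fv a S out η D kk v ∧
    η v + mv a S out η D kk v =
      degS a S out v + ((Fv a S out η D kk v).filter fun f => prec v f ed).card

/-- the parent map (toward the sink) of an encoded spanning tree -/
def par (e : V → Option (V × ℕ)) (v : V) : Option V :=
  (e v).bind fun p => if p.1 ∈ S then some p.1 else none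

/-- spanning trees of the wired graph on `S`, oriented toward the sink:
every vertex of `S` carries exactly one valid oriented edge, and following
these edges one reaches the sink. -/
def IsSpanningTree (e : V → Option (V × ℕ)) : Prop :=
  (∀ v ∉ S, e v = none) ∧
  (∀ v ∈ S, ∃ w i, e v = some (w, i) ∧ i < a v w ∧ (w ∈ S ∨ w ∈ out v)) ∧
  (∀ v ∈ S, ∃ m, iterP (par S e) m v = none)

/-- stable configurations on the wired graph on `S` -/
def Stable : Prop := ∀ v ∈ S, η v < degS a S out v

/-- ample for every nonempty subset of `S` -/
def Ample : Prop := ∀ F ⊆ S, F.Nonempty → ∃ x ∈ F, ∑ y ∈ F, a x y ≤ η x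

/-- recurrent configurations on the wired graph on `S` -/
def Recurrent : Prop := Stable a S out η ∧ Ample a S η

end Anchored

/-! ### Auxiliary development for Statement 19 -/

namespace Anchored

section Basics

variable {V : Type*} [DecidableEq V]
variable (a : V → V → ℕ) (S : Finset V) (out : V → Finset V)
variable (η : V → ℕ) (D : ℕ → Finset V) (kk : ℕ)

lemma mem_edgesTo {v w : V} {i : ℕ} {T : Finset V} :
    (w, i) ∈ edgesTo a v T ↔ w ∈ T ∧ i < a v w := by
  simp only [edgesTo, Finset.mem_biUnion, Finset.mem_image, Finset.mem_range, Prod.mk.injEq]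
  aesop

lemma mem_edgesTo' {v : V} {f : V × ℕ} {T : Finset V} :
    f ∈ edgesTo a v T ↔ f.1 ∈ T ∧ f.2 < a v f.1 := by
  obtain ⟨w, i⟩ := f; exact mem_edgesTo a

lemma edgesTo_card {v : V} {T : Finset V} :
    (edgesTo a v T).card = ∑ w ∈ T, a v w := by
  classical
  rw [edgesTo, Finset.card_biUnion]
  · refine Finset.sum_congr rfl fun w _ => ?_
    rw [Finset.card_image_of_injective _ (fun i j h => by simpa using h), Finset.card_range]
  · intro x hx y hy hxy
    simp only [Finset.disjoint_left, Finset.mem_image, Finset.mem_range]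
    rintro ⟨w, i⟩ ⟨j, _, h⟩ ⟨j', _, h'⟩
    apply hxy
    have h1 : x = w := (Prod.mk.injEq .. ▸ h).1
    have h2 : y = w := (Prod.mk.injEq .. ▸ h').1
    rw [h1, h2]

lemma edgesTo_union {v : V} {T T' : Finset V} :
    edgesTo a v (T ∪ T') = edgesTo a v T ∪ edgesTo a v T' := by
  ext ⟨w, i⟩
  simp only [mem_edgesTo, Finset.mem_union]
  tauto

lemma edgesTo_congr {v : V} {T T' : Finset V}
    (h : ∀ w, 0 < a v w → (w ∈ T ↔ w ∈ T')) :
    edgesTo a v T = edgesTo a v T' := by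
  ext ⟨w, i⟩
  simp only [mem_edgesTo]
  constructor
  · rintro ⟨hw, hi⟩; exact ⟨(h w (Nat.pos_of_ne_zero (by omega))).1 hw, hi⟩
  · rintro ⟨hw, hi⟩; exact ⟨(h w (Nat.pos_of_ne_zero (by omega))).2 hw, hi⟩

lemma U_zero : U a S η D kk 0 = S := rfl

lemma U_succ (m : ℕ) : U a S η D kk (m + 1) =
    (U a S η D kk m).filter fun v =>
      v ∈ D (kk - m / plen S) ∨ η v < ∑ w ∈ U a S η D kk m, a v w := rfl

lemma U_succ_subset (m : ℕ) : U a S η D kk (m + 1) ⊆ U a S η D kk m := by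
  rw [U_succ]; exact Finset.filter_subset _ _

lemma U_subset : ∀ m, U a S η D kk m ⊆ S
  | 0 => Finset.Subset.refl S
  | (m+1) => Finset.Subset.trans (U_succ_subset a S η D kk m) (U_subset m)

lemma U_anti {m n : ℕ} (h : m ≤ n) : U a S η D kk n ⊆ U a S η D kk m := by
  induction n with
  | zero => simp_all
  | succ n ih =>
    rcases Nat.eq_or_lt_of_le h with rfl | h'
    · exact Finset.Subset.refl _
    · exact (U_succ_subset a S η D kk n).trans (ih (Nat.lt_succ_iff.mp h'))

lemma U_card_le (m : ℕ) : (U a S η D kk m).card ≤ S.card :=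
  Finset.card_le_card (U_subset a S η D kk m)

/-- persistence of stability within a phase -/
lemma U_persist {n : ℕ} (h : U a S η D kk (n + 1) = U a S η D kk n) :
    ∀ j, (n + j) / plen S = n / plen S → U a S η D kk (n + j + 1) = U a S η D kk n := by
  intro j
  induction j with
  | zero => intro _; exact h
  | succ j ih =>
    intro hq
    have hq' : (n + j) / plen S = n / plen S := by
      have h1 : n / plen S ≤ (n + j) / plen S := Nat.div_le_div_right (Nat.le_add_right _ _)
      have h2 : (n + j) / plen S ≤ (n + (j+1)) / plen S :=
        Nat.div_le_div_right (by omega)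
      omega
    have ihj := ih hq'
    have : n + (j + 1) + 1 = (n + j + 1) + 1 := by ring
    rw [this, U_succ, ihj]
    rw [show n + j + 1 = n + (j+1) by ring, hq]
    rw [← U_succ, h]

/-- within any window of `c+1` steps with card bound `c`, some step is trivial -/
lemma U_exists_stab (n c : ℕ) (hc : (U a S η D kk n).card ≤ c) :
    ∃ r ≤ c, U a S η D kk (n + r + 1) = U a S η D kk (n + r) := by
  by_contra hcon
  push_neg at hcon
  have key : ∀ r ≤ c + 1, (U a S η D kk (n + r)).card + r ≤ c := by
    intro r hr
    induction r with
    | zero => simpa using hc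
    | succ r ih =>
      have hr' : r ≤ c := by omega
      have h1 := ih (by omega)
      have hss : U a S η D kk (n + r + 1) ⊂ U a S η D kk (n + r) :=
        (Finset.ssubset_iff_of_subset (U_succ_subset a S η D kk (n+r))).mpr (by
          have := hcon r hr'
          rcases Finset.exists_of_ssubset (lt_of_le_of_ne (U_succ_subset a S η D kk (n+r)) this) with ⟨x, hx, hx'⟩
          exact ⟨x, hx, hx'⟩)
      have := Finset.card_lt_card hss
      have : (U a S η D kk (n + (r+1))).card < (U a S η D kk (n + r)).card := by
        rw [show n + (r+1) = n + r + 1 by ring]; exact this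
      omega
    
  have h1 := key (c+1) le_rfl
  omega

end Basics

section Tau

variable {V : Type*} [DecidableEq V]
variable (a : V → V → ℕ) (S : Finset V) (out : V → Finset V)
variable (η : V → ℕ) (D : ℕ → Finset V) (kk : ℕ)

lemma plen_pos : 0 < plen S := Nat.succ_pos _

/-- the first transition at which `v` is not forbidden -/
noncomputable def relv (v : V) : ℕ := sInf {m | v ∉ D (kk - m / plen S)}

variable {D kk}

lemma relv_nonempty (hD0 : D 0 = ∅) (v : V) :
    {m | v ∉ D (kk - m / plen S)}.Nonempty := by
  refine ⟨kk * plen S, ?_⟩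
  have : kk * plen S / plen S = kk := Nat.mul_div_cancel _ (plen_pos S)
  simp only [Set.mem_setOf_eq, this, Nat.sub_self, hD0]
  exact Finset.notMem_empty v

lemma relv_free (hD0 : D 0 = ∅) (hmono : Monotone D) {v : V} {m : ℕ}
    (h : relv S D kk v ≤ m) : v ∉ D (kk - m / plen S) := by
  have h1 : v ∉ D (kk - relv S D kk v / plen S) := Nat.sInf_mem (relv_nonempty S hD0 v)
  intro hc
  have h2 : relv S D kk v / plen S ≤ m / plen S := Nat.div_le_div_right h
  have h3 : kk - m / plen S ≤ kk - relv S D kk v / plen S := by omega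
  exact h1 (hmono h3 hc)

lemma relv_forb {v : V} {m : ℕ} (h : m < relv S D kk v) : v ∈ D (kk - m / plen S) := by
  by_contra hc
  have h2 : m ∈ {m | v ∉ D (kk - m / plen S)} := hc
  have h3 : relv S D kk v ≤ m := Nat.sInf_le h2
  omega

lemma relv_dvd (hD0 : D 0 = ∅) (v : V) : plen S ∣ relv S D kk v := by
  set r := relv S D kk v with hr
  have h1 : v ∉ D (kk - r / plen S) := Nat.sInf_mem (relv_nonempty S hD0 v)
  have h2 : plen S * (r / plen S) / plen S = r / plen S :=
    Nat.mul_div_cancel_left _ (plen_pos S)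
  have h3 : plen S * (r / plen S) ∈ {m | v ∉ D (kk - m / plen S)} := by
    simp only [Set.mem_setOf_eq, h2]; exact h1
  have h4 : r ≤ plen S * (r / plen S) := Nat.sInf_le h3
  have h5 : plen S * (r / plen S) ≤ r := Nat.mul_div_le r (plen S)
  exact ⟨r / plen S, by omega⟩

variable {a S out η}

lemma U_burn (hD0 : D 0 = ∅) (hA : Ample a S η) {m : ℕ} (hm : kk * plen S ≤ m)
    (hne : (U a S η D kk m).Nonempty) : U a S η D kk (m + 1) ⊂ U a S η D kk m := by
  have hidx : kk - m / plen S = 0 := by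
    have : kk ≤ m / plen S := (Nat.le_div_iff_mul_le (plen_pos S)).mpr hm
    omega
  obtain ⟨x, hx, hxa⟩ := hA _ (U_subset a S η D kk m) hne
  refine (Finset.ssubset_iff_of_subset (U_succ_subset a S η D kk m)).mpr ⟨x, hx, ?_⟩
  rw [U_succ, Finset.mem_filter, hidx, hD0]
  push_neg
  intro _
  exact ⟨Finset.notMem_empty x, by omega⟩

lemma U_eventually_empty (hD0 : D 0 = ∅) (hA : Ample a S η) :
    U a S η D kk (kk * plen S + S.card) = ∅ := by
  by_contra hc
  have hne : (U a S η D kk (kk * plen S + S.card)).Nonempty :=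
    Finset.nonempty_iff_ne_empty.mpr hc
  have key : ∀ j, j ≤ S.card → (U a S η D kk (kk * plen S + j)).card + j ≤ S.card := by
    intro j hj
    induction j with
    | zero => simpa using U_card_le a S η D kk _
    | succ j ih =>
      have h1 := ih (by omega)
      have hne' : (U a S η D kk (kk * plen S + j)).Nonempty :=
        hne.mono (U_anti a S η D kk (by omega))
      have h2 := Finset.card_lt_card (U_burn hD0 hA (Nat.le_add_right _ _) hne')
      have harr : kk * plen S + j + 1 = kk * plen S + (j + 1) := by ring
      rw [harr] at h2
      omega
  have h3 := key S.card le_rfl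
  have h4 := Finset.card_pos.mpr hne
  omega

lemma tau_nonempty (hD0 : D 0 = ∅) (hA : Ample a S η) (v : V) :
    {m | v ∉ U a S η D kk m}.Nonempty :=
  ⟨kk * plen S + S.card, by
    simp only [Set.mem_setOf_eq, U_eventually_empty hD0 hA]
    exact Finset.notMem_empty v⟩

lemma notMem_U_tau (hD0 : D 0 = ∅) (hA : Ample a S η) (v : V) :
    v ∉ U a S η D kk (τ a S η D kk v) :=
  Nat.sInf_mem (tau_nonempty hD0 hA v)

lemma mem_U_iff (hD0 : D 0 = ∅) (hA : Ample a S η) {v : V} {m : ℕ} :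
    v ∈ U a S η D kk m ↔ m < τ a S η D kk v := by
  constructor
  · intro h
    by_contra hc
    exact (U_anti a S η D kk (by omega)) h |> notMem_U_tau hD0 hA v
  · intro h
    have := Nat.notMem_of_lt_sInf h
    simpa using this

lemma tau_pos (hD0 : D 0 = ∅) (hA : Ample a S η) {v : V} (hv : v ∈ S) :
    0 < τ a S η D kk v :=
  (mem_U_iff hD0 hA).mp (by rw [U_zero]; exact hv)

lemma burn_facts (hD0 : D 0 = ∅) (hA : Ample a S η) {v : V} (hv : v ∈ S) :
    v ∉ D (kk - (τ a S η D kk v - 1) / plen S) ∧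
      ∑ w ∈ U a S η D kk (τ a S η D kk v - 1), a v w ≤ η v := by
  have hpos : 0 < τ a S η D kk v := tau_pos hD0 hA hv
  have h1 : v ∈ U a S η D kk (τ a S η D kk v - 1) :=
    (mem_U_iff hD0 hA).mpr (by omega)
  have h2 := notMem_U_tau hD0 hA (D := D) (kk := kk) v
  rw [show τ a S η D kk v = (τ a S η D kk v - 1) + 1 by omega, U_succ,
    Finset.mem_filter] at h2
  push_neg at h2
  obtain ⟨hd, hs⟩ := h2 h1
  exact ⟨hd, by omega⟩

lemma relv_le_tau (hD0 : D 0 = ∅) (hA : Ample a S η) {v : V} (hv : v ∈ S) :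
    relv S D kk v + 1 ≤ τ a S η D kk v := by
  have h1 : v ∉ D (kk - (τ a S η D kk v - 1) / plen S) := (burn_facts hD0 hA hv).1
  have h2 : relv S D kk v ≤ τ a S η D kk v - 1 := Nat.sInf_le h1
  have h3 : 0 < τ a S η D kk v := tau_pos hD0 hA hv
  omega

/-- past the stabilization point, `U` is constant until the end of the phase -/
lemma U_stab_range (s : ℕ) :
    ∀ x y, S.card ≤ x → x ≤ y → y ≤ plen S →
      U a S η D kk (plen S * s + y) = U a S η D kk (plen S * s + x) := by
  obtain ⟨r, hr, heq⟩ := U_exists_stab a S η D kk (plen S * s) S.card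
    (U_card_le a S η D kk _)
  have key : ∀ z, r ≤ z → z ≤ plen S →
      U a S η D kk (plen S * s + z) = U a S η D kk (plen S * s + r) := by
    intro z hz hzP
    rcases Nat.eq_or_lt_of_le hz with rfl | hlt
    · rfl
    · have hper := U_persist a S η D kk (n := plen S * s + r) heq (z - r - 1) (by
        have e1 : plen S * s + r + (z - r - 1) = plen S * s + (z - 1) := by omega
        have e2 : (plen S * s + (z - 1)) / plen S = s + (z-1) / plen S :=
          Nat.mul_add_div (plen_pos S) _ _
        have e3 : (plen S * s + r) / plen S = s + r / plen S :=
          Nat.mul_add_div (plen_pos S) _ _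
        have e4 : (z - 1) / plen S = 0 := Nat.div_eq_of_lt (by omega)
        have e5 : r / plen S = 0 := Nat.div_eq_of_lt (by
          have : S.card < plen S := Nat.lt_succ_self _
          omega)
        rw [e1, e2, e3, e4, e5])
      rw [show plen S * s + r + (z - r - 1) + 1 = plen S * s + z by omega] at hper
      exact hper
  intro x y hx hxy hyP
  rw [key x (le_trans hr hx) (le_trans hxy hyP), key y (by omega) hyP]

/-- the last transition of each phase is trivial -/
lemma U_phase_end (s : ℕ) :
    U a S η D kk (plen S * s + plen S) = U a S η D kk (plen S * s + (plen S - 1)) :=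
  U_stab_range s _ _ (by rw [show plen S = S.card + 1 from rfl]; omega) (by omega) le_rfl

lemma tau_mod (hD0 : D 0 = ∅) (hA : Ample a S η) {v : V} (hv : v ∈ S) :
    τ a S η D kk v % plen S ≠ 0 := by
  intro hmod
  have hpos : 0 < τ a S η D kk v := tau_pos hD0 hA hv
  obtain ⟨s, hs⟩ := Nat.dvd_of_mod_eq_zero hmod
  rcases s with _ | s
  · omega
  · have hstab := U_phase_end (a := a) (S := S) (η := η) (D := D) (kk := kk) s
    have hP := plen_pos S
    have e1 : plen S * s + plen S = τ a S η D kk v := by rw [hs]; ring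
    have e2 : plen S * s + (plen S - 1) = τ a S η D kk v - 1 := by omega
    rw [e1, e2] at hstab
    have h1 : v ∈ U a S η D kk (τ a S η D kk v - 1) := (mem_U_iff hD0 hA).mpr (by omega)
    have h2 := notMem_U_tau hD0 hA (D := D) (kk := kk) v
    rw [hstab] at h2
    exact h2 h1

/-- Claim C : a vertex burning at the first step of a phase was just released -/
lemma claimC (hD0 : D 0 = ∅) (hmono : Monotone D) (hA : Ample a S η) {v : V} (hv : v ∈ S)
    {q : ℕ} (hq : τ a S η D kk v = q * plen S + 1) :
    relv S D kk v = q * plen S ∧ (1 ≤ q → q ≤ kk ∧ v ∈ D (kk - q + 1)) := by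
  have hP := plen_pos S
  obtain ⟨hfree, hsum⟩ := burn_facts hD0 hA hv (D := D) (kk := kk)
  rw [hq] at hfree hsum
  simp only [Nat.add_sub_cancel] at hfree hsum
  have hle : relv S D kk v ≤ q * plen S := Nat.sInf_le hfree
  rcases q with _ | q'
  · exact ⟨by omega, by omega⟩
  · have hstab := U_phase_end (a := a) (S := S) (η := η) (D := D) (kk := kk) q'
    have e1 : plen S * q' + plen S = (q' + 1) * plen S := by ring
    have e2 : plen S * q' + (plen S - 1) = (q' + 1) * plen S - 1 := by omega
    rw [e1, e2] at hstab
    have hm1 : v ∈ U a S η D kk ((q' + 1) * plen S) := (mem_U_iff hD0 hA).mpr (by omega)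
    have hm0 : v ∈ U a S η D kk ((q' + 1) * plen S - 1) := by rw [← hstab]; exact hm1
    have hmem : v ∈ U a S η D kk (((q' + 1) * plen S - 1) + 1) := by
      rw [show ((q' + 1) * plen S - 1) + 1 = (q' + 1) * plen S by omega]
      exact hm1
    rw [U_succ, Finset.mem_filter] at hmem
    have hdiv : ((q' + 1) * plen S - 1) / plen S = q' := by
      have e3 : (q' + 1) * plen S - 1 = plen S * q' + (plen S - 1) := by omega
      rw [e3, Nat.mul_add_div hP, Nat.div_eq_of_lt (by omega)]
      omega
    have hforb : v ∈ D (kk - q') := by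
      rcases hmem.2 with h | h
      · rwa [hdiv] at h
      · exfalso
        rw [← hstab] at h
        omega
    have hqkk : q' + 1 ≤ kk := by
      by_contra hgt
      rw [show kk - q' = 0 by omega, hD0] at hforb
      exact Finset.notMem_empty v hforb
    have hrelge : (q' + 1) * plen S ≤ relv S D kk v := by
      by_contra hlt
      have hle2 : relv S D kk v ≤ (q' + 1) * plen S - 1 := by omega
      have h5 := relv_free S hD0 hmono hle2
      rw [hdiv] at h5
      exact h5 hforb
    exact ⟨by omega, fun _ => ⟨hqkk, by rwa [show kk - (q' + 1) + 1 = kk - q' by omega]⟩⟩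

lemma tau_eq_of {v : V} {m : ℕ} (h1 : v ∈ U a S η D kk m)
    (h2 : v ∉ U a S η D kk (m + 1)) : τ a S η D kk v = m + 1 := by
  have hub : (m + 1) ∈ {n | v ∉ U a S η D kk n} := h2
  refine le_antisymm (Nat.sInf_le hub) ?_
  refine le_csInf ⟨m + 1, hub⟩ fun b hb => ?_
  by_contra hbl
  push_neg at hbl
  exact hb (U_anti a S η D kk (by omega) h1)

lemma mv_add_sum (v : V) :
    mv a S out η D kk v + ∑ w ∈ U a S η D kk (τ a S η D kk v - 1), a v w =
      degS a S out v := by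
  have hsd : (∑ w ∈ S \ U a S η D kk (τ a S η D kk v - 1), a v w) +
      ∑ w ∈ U a S η D kk (τ a S η D kk v - 1), a v w = ∑ w ∈ S, a v w :=
    Finset.sum_sdiff (U_subset a S η D kk _)
  simp only [mv, degS]
  omega

end Tau

section ClaimD

set_option linter.unusedSectionVars false

variable {V : Type*} [DecidableEq V]
variable {a : V → V → ℕ} {S : Finset V} {out : V → Finset V}
variable {η η₁ η₂ : V → ℕ} {D : ℕ → Finset V} {kk : ℕ}
variable {prec : V → (V × ℕ) → (V × ℕ) → Prop} {e e₁ e₂ : V → Option (V × ℕ)}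

/-- Claim D : the burning time of a vertex is `max` of (parent's time + 1) and
its release time. -/
lemma claimD (hD0 : D 0 = ∅) (hmono : Monotone D) (hA : Ample a S η)
    (hdisj : ∀ v w, w ∈ out v → w ∉ S)
    (hspec : Spec a S out η D kk prec e) {v : V} (hv : v ∈ S)
    {ed : V × ℕ} (hed : e v = some ed) :
    τ a S η D kk v =
      max ((if ed.1 ∈ S then τ a S η D kk ed.1 else 0) + 1) (relv S D kk v + 1) := by
  obtain ⟨ed', hed', hF, _⟩ := hspec.2 v hv
  rw [hed] at hed'
  obtain rfl : ed = ed' := by injection hed'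
  set T := τ a S η D kk v with hT
  have hpos : 0 < T := tau_pos hD0 hA hv
  have hrel : relv S D kk v + 1 ≤ T := relv_le_tau hD0 hA hv
  simp only [Fv, ← hT] at hF
  by_cases hc : (T - 1) % plen S = 0
  · rw [if_pos hc] at hF
    obtain ⟨q, hq⟩ : ∃ q, T = q * plen S + 1 :=
      ⟨(T - 1) / plen S, by
        have h5 := Nat.div_add_mod (T - 1) (plen S)
        rw [Nat.mul_comm] at h5
        omega⟩
    have hCC := claimC hD0 hmono hA hv hq
    have hb : (if ed.1 ∈ S then τ a S η D kk ed.1 else 0) + 1 ≤ T := by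
      rcases Finset.mem_union.mp hF with h | h
      · rw [mem_edgesTo'] at h
        rw [if_neg (hdisj v ed.1 h.1)]
        omega
      · rw [mem_edgesTo'] at h
        have h1 : ed.1 ∈ S := (Finset.mem_sdiff.mp h.1).1
        have h2 : ed.1 ∉ U a S η D kk (T - 1) := (Finset.mem_sdiff.mp h.1).2
        rw [if_pos h1]
        have h3 : ¬ (T - 1 < τ a S η D kk ed.1) := fun hlt =>
          h2 ((mem_U_iff hD0 hA).mpr hlt)
        omega
    have he : T = relv S D kk v + 1 := by rw [hCC.1]; omega
    omega
  · rw [if_neg hc] at hF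
    rw [mem_edgesTo'] at hF
    have h1 : ed.1 ∈ U a S η D kk (T - 2) := (Finset.mem_sdiff.mp hF.1).1
    have h2 : ed.1 ∉ U a S η D kk (T - 1) := (Finset.mem_sdiff.mp hF.1).2
    have hS : ed.1 ∈ S := U_subset a S η D kk _ h1
    have hT1 : T - 1 ≠ 0 := fun h => hc (by rw [h]; exact Nat.zero_mod _)
    have e1 : τ a S η D kk ed.1 = T - 1 := by
      have q1 : T - 2 < τ a S η D kk ed.1 := (mem_U_iff hD0 hA).mp h1
      have q2 : ¬ (T - 1 < τ a S η D kk ed.1) := fun hlt =>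
        h2 ((mem_U_iff hD0 hA).mpr hlt)
      omega
    rw [if_pos hS, e1]
    omega

/-- the burning times are determined by the encoded tree -/
lemma tau_eq_of_spec (hD0 : D 0 = ∅) (hmono : Monotone D)
    (hdisj : ∀ v w, w ∈ out v → w ∉ S)
    (hA₁ : Ample a S η₁) (hA₂ : Ample a S η₂)
    (h₁ : Spec a S out η₁ D kk prec e) (h₂ : Spec a S out η₂ D kk prec e) :
    ∀ v ∈ S, τ a S η₁ D kk v = τ a S η₂ D kk v := by
  suffices key : ∀ n v, v ∈ S → τ a S η₁ D kk v ≤ n →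
      τ a S η₁ D kk v = τ a S η₂ D kk v by
    exact fun v hv => key (τ a S η₁ D kk v) v hv le_rfl
  intro n
  induction n with
  | zero =>
    intro v hv hle
    have := tau_pos hD0 hA₁ hv (D := D) (kk := kk)
    omega
  | succ n ih =>
    intro v hv hle
    obtain ⟨ed, hed, -, -⟩ := h₁.2 v hv
    have d₁ := claimD hD0 hmono hA₁ hdisj h₁ hv hed
    have d₂ := claimD hD0 hmono hA₂ hdisj h₂ hv hed
    by_cases hS : ed.1 ∈ S
    · rw [if_pos hS] at d₁ d₂
      have hlt : τ a S η₁ D kk ed.1 + 1 ≤ τ a S η₁ D kk v := by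
        rw [d₁]; exact le_max_left _ _
      have heq := ih ed.1 hS (by omega)
      rw [d₁, d₂, heq]
    · rw [if_neg hS] at d₁ d₂
      rw [d₁, d₂]

lemma U_eq_of_spec (hD0 : D 0 = ∅) (hmono : Monotone D)
    (hdisj : ∀ v w, w ∈ out v → w ∉ S)
    (hA₁ : Ample a S η₁) (hA₂ : Ample a S η₂)
    (h₁ : Spec a S out η₁ D kk prec e) (h₂ : Spec a S out η₂ D kk prec e) :
    ∀ m, U a S η₁ D kk m = U a S η₂ D kk m := by
  intro m
  ext w
  by_cases hw : w ∈ S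
  · rw [mem_U_iff hD0 hA₁, mem_U_iff hD0 hA₂,
      tau_eq_of_spec hD0 hmono hdisj hA₁ hA₂ h₁ h₂ w hw]
  · exact iff_of_false (fun h => hw (U_subset a S η₁ D kk m h))
      (fun h => hw (U_subset a S η₂ D kk m h))

/-- injectivity of the anchored burning bijection -/
lemma eta_eq_of_spec (hD0 : D 0 = ∅) (hmono : Monotone D)
    (hdisj : ∀ v w, w ∈ out v → w ∉ S)
    (hA₁ : Ample a S η₁) (hA₂ : Ample a S η₂)
    (h₁ : Spec a S out η₁ D kk prec e) (h₂ : Spec a S out η₂ D kk prec e) :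
    ∀ v ∈ S, η₁ v = η₂ v := by
  intro v hv
  obtain ⟨ed, hed, hF₁, heq₁⟩ := h₁.2 v hv
  obtain ⟨ed', hed', hF₂, heq₂⟩ := h₂.2 v hv
  rw [hed] at hed'
  obtain rfl : ed = ed' := by injection hed'
  have hτ := tau_eq_of_spec hD0 hmono hdisj hA₁ hA₂ h₁ h₂ v hv
  have hU := U_eq_of_spec hD0 hmono hdisj hA₁ hA₂ h₁ h₂
  have hFv : Fv a S out η₁ D kk v = Fv a S out η₂ D kk v := by
    simp only [Fv, hτ, hU]
  have hmv : mv a S out η₁ D kk v = mv a S out η₂ D kk v := by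
    simp only [mv, hτ, hU]
  rw [hFv, hmv] at heq₁
  omega

/-- in a strict total order, the number of predecessors determines the element -/
lemma rank_unique {r : (V × ℕ) → (V × ℕ) → Prop} (hto : IsStrictTotalOrder (V × ℕ) r)
    {F : Finset (V × ℕ)} {f₁ f₂ : V × ℕ} (h₁ : f₁ ∈ F) (h₂ : f₂ ∈ F)
    (hc : (F.filter fun f => r f f₁).card = (F.filter fun f => r f f₂).card) :
    f₁ = f₂ := by
  letI := hto
  have key : ∀ g₁ g₂ : V × ℕ, g₁ ∈ F → g₂ ∈ F → r g₁ g₂ →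
      (F.filter fun f => r f g₁).card < (F.filter fun f => r f g₂).card := by
    intro g₁ g₂ hg₁ hg₂ hr
    apply Finset.card_lt_card
    constructor
    · intro f hf
      rw [Finset.mem_filter] at hf ⊢
      exact ⟨hf.1, _root_.trans hf.2 hr⟩
    · intro hsub
      have : g₁ ∈ F.filter fun f => r f g₂ := Finset.mem_filter.mpr ⟨hg₁, hr⟩
      have := hsub this
      rw [Finset.mem_filter] at this
      exact absurd this.2 (irrefl_of r g₁)
  rcases trichotomous_of r f₁ f₂ with h | h | h
  · exact absurd hc (Nat.ne_of_lt (key _ _ h₁ h₂ h))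
  · exact h
  · exact absurd hc (Nat.ne_of_gt (key _ _ h₂ h₁ h))

/-- the tree encoded by a configuration is unique -/
lemma spec_tree_unique (hprec : ∀ v, IsStrictTotalOrder (V × ℕ) (prec v))
    (h₁ : Spec a S out η D kk prec e₁) (h₂ : Spec a S out η D kk prec e₂) :
    e₁ = e₂ := by
  funext v
  by_cases hv : v ∈ S
  · obtain ⟨ed₁, hed₁, hF₁, heq₁⟩ := h₁.2 v hv
    obtain ⟨ed₂, hed₂, hF₂, heq₂⟩ := h₂.2 v hv
    have : ed₁ = ed₂ := rank_unique (hprec v) hF₁ hF₂ (by omega)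
    rw [hed₁, hed₂, this]
  · rw [h₁.1 v hv, h₂.1 v hv]

/-- everything depends on `η` only through its values on `S` -/
lemma U_congr (h : ∀ v ∈ S, η₁ v = η₂ v) :
    ∀ m, U a S η₁ D kk m = U a S η₂ D kk m := by
  intro m
  induction m with
  | zero => rfl
  | succ m ih =>
    rw [U_succ, U_succ, ih]
    apply Finset.filter_congr
    intro x hx
    rw [h x (U_subset a S η₂ D kk m hx)]

lemma tau_congr (h : ∀ v ∈ S, η₁ v = η₂ v) (v : V) :
    τ a S η₁ D kk v = τ a S η₂ D kk v := by
  unfold τ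
  congr 1
  ext m
  simp only [Set.mem_setOf_eq, U_congr h]

lemma Spec_congr (h : ∀ v ∈ S, η₁ v = η₂ v)
    (hs : Spec a S out η₁ D kk prec e) : Spec a S out η₂ D kk prec e := by
  refine ⟨hs.1, fun v hv => ?_⟩
  obtain ⟨ed, hed, hF, heq⟩ := hs.2 v hv
  have hFv : Fv a S out η₁ D kk v = Fv a S out η₂ D kk v := by
    simp only [Fv, tau_congr h, U_congr h]
  have hmv : mv a S out η₁ D kk v = mv a S out η₂ D kk v := by
    simp only [mv, tau_congr h, U_congr h]
  refine ⟨ed, hed, by rw [← hFv]; exact hF, ?_⟩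
  rw [← hFv, ← hmv, ← h v hv]
  exact heq

end ClaimD

section Depth

set_option linter.unusedSectionVars false

variable {V : Type*} [DecidableEq V] {S : Finset V} {p : V → Option V}

lemma iterP_add (p : V → Option V) :
    ∀ m n (v : V), iterP p (m + n) v = (iterP p m v).bind (iterP p n) := by
  intro m
  induction m with
  | zero => intro n v; simp [iterP]
  | succ m ih =>
    intro n v
    rw [show m + 1 + n = (m + n) + 1 by ring]
    show (p v).bind (iterP p (m + n)) = ((p v).bind (iterP p m)).bind (iterP p n)
    cases hp : p v with
    | none => rfl
    | some w => simp only [Option.bind_some]; exact ih n w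

lemma iterP_one (p : V → Option V) (v : V) : iterP p 1 v = p v := by
  show (p v).bind (iterP p 0) = p v
  cases p v <;> rfl

lemma iterP_succ' (p : V → Option V) (m : ℕ) (v : V) :
    iterP p (m + 1) v = (iterP p m v).bind p := by
  rw [iterP_add p m 1 v]
  cases iterP p m v with
  | none => rfl
  | some w => simp only [Option.bind_some, iterP_one]

/-- the depth of `v` : number of steps to reach the sink -/
noncomputable def dpth (p : V → Option V) (v : V) : ℕ := sInf {m | iterP p m v = none}

lemma dpth_mem {v : V} (hv : ∃ m, iterP p m v = none) :
    iterP p (dpth p v) v = none := Nat.sInf_mem hv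

lemma dpth_min {v : V} {m : ℕ} (hm : m < dpth p v) : iterP p m v ≠ none :=
  fun h => Nat.notMem_of_lt_sInf hm h

lemma dpth_pos {v : V} (hv : ∃ m, iterP p m v = none) : 0 < dpth p v := by
  rcases Nat.eq_zero_or_pos (dpth p v) with h | h
  · have := dpth_mem hv
    rw [h] at this
    exact absurd this (by simp [iterP])
  · exact h

lemma dpth_parent {v w : V} (hv : ∃ m, iterP p m v = none) (hw : p v = some w) :
    dpth p v = dpth p w + 1 := by
  have hstep : ∀ m, iterP p (m + 1) v = iterP p m w := by
    intro m
    show (p v).bind (iterP p m) = iterP p m w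
    rw [hw, Option.bind_some]
  have hwne : ∃ m, iterP p m w = none := by
    obtain ⟨m, hm⟩ := hv
    rcases m with _ | m
    · exact absurd hm (by simp [iterP])
    · exact ⟨m, by rw [← hstep]; exact hm⟩
  have h1 : iterP p (dpth p w + 1) v = none := by rw [hstep]; exact dpth_mem hwne
  have h2 : dpth p v ≤ dpth p w + 1 := Nat.sInf_le h1
  have h3 : dpth p w + 1 ≤ dpth p v := by
    have hpos := dpth_pos hv
    have hm := dpth_mem hv
    rw [show dpth p v = (dpth p v - 1) + 1 by omega, hstep] at hm
    have hmem : (dpth p v - 1) ∈ {m | iterP p m w = none} := hm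
    have := Nat.sInf_le hmem
    have hdef : dpth p w = sInf {m | iterP p m w = none} := rfl
    omega
  omega

lemma dpth_le_card (hp : ∀ u w, p u = some w → w ∈ S) {v : V} (hvS : v ∈ S)
    (hv : ∃ m, iterP p m v = none) : dpth p v ≤ S.card := by
  classical
  set d := dpth p v with hd
  set g : ℕ → V := fun m => (iterP p m v).getD v with hg
  have hsome : ∀ m < d, iterP p m v = some (g m) := by
    intro m hm
    have := dpth_min hm
    cases h : iterP p m v with
    | none => exact absurd h this
    | some u => simp [hg, h]
  have hmemS : ∀ m < d, g m ∈ S := by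
    intro m hm
    rcases m with _ | m
    · have : iterP p 0 v = some v := rfl
      have h0 := hsome 0 hm
      rw [this] at h0
      rw [show g 0 = v by injection h0]
      exact hvS
    · have h1 := hsome (m + 1) hm
      rw [iterP_succ'] at h1
      cases h2 : iterP p m v with
      | none => rw [h2] at h1; exact absurd h1 (by simp)
      | some u =>
        rw [h2, Option.bind_some] at h1
        exact hp u _ h1
  have hinj : Set.InjOn g (Finset.range d) := by
    have key : ∀ i j, i < j → j < d → g i = g j → False := by
      intro i j hij hjd heq
      have h1 := hsome i (by omega)
      have h2 := hsome j hjd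
      have h3 : iterP p (i + (d - j)) v = none := by
        calc iterP p (i + (d - j)) v = (iterP p i v).bind (iterP p (d - j)) := iterP_add p i _ v
        _ = iterP p (d - j) (g i) := by rw [h1, Option.bind_some]
        _ = iterP p (d - j) (g j) := by rw [heq]
        _ = (iterP p j v).bind (iterP p (d - j)) := by rw [h2, Option.bind_some]
        _ = iterP p (j + (d - j)) v := (iterP_add p j _ v).symm
        _ = iterP p d v := by rw [show j + (d - j) = d by omega]
        _ = none := dpth_mem hv
      exact dpth_min (by omega) h3
    intro i hi j hj heq
    simp only [Finset.coe_range, Set.mem_Iio] at hi hj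
    rcases lt_trichotomy i j with h | h | h
    · exact absurd heq (fun he => key i j h hj he)
    · exact h
    · exact absurd heq.symm (fun he => key j i h hi he)
  have := Finset.card_le_card_of_injOn g (fun m hm => hmemS m (Finset.mem_range.mp hm)) hinj
  rwa [Finset.card_range] at this

lemma par_some {e : V → Option (V × ℕ)} {v w : V}
    (h : par S e v = some w) : ∃ ed : V × ℕ, e v = some ed ∧ ed.1 = w ∧ w ∈ S := by
  unfold par at h
  cases he : e v with
  | none => rw [he] at h; exact absurd h (by simp)
  | some ed =>
    rw [he, Option.bind_some] at h
    by_cases hS : ed.1 ∈ S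
    · rw [if_pos hS] at h
      have h' : ed.1 = w := Option.some.inj h
      exact ⟨ed, rfl, h', h' ▸ hS⟩
    · rw [if_neg hS] at h
      exact absurd h (by simp)

end Depth

section Build

set_option linter.unusedSectionVars false

variable {V : Type*} [DecidableEq V]

/-- burning times built from a spanning tree -/
noncomputable def tbuild (S : Finset V) (D : ℕ → Finset V) (kk : ℕ)
    (t' : V → Option (V × ℕ)) : ℕ → V → ℕ
  | 0, _ => 1
  | (n+1), v =>
    match t' v with
    | none => 1
    | some ed =>
      if ed.1 ∈ S then max (tbuild S D kk t' n ed.1 + 1) (relv S D kk v + 1)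
      else max 1 (relv S D kk v + 1)

noncomputable def tauh (S : Finset V) (D : ℕ → Finset V) (kk : ℕ)
    (t' : V → Option (V × ℕ)) (v : V) : ℕ :=
  tbuild S D kk t' (dpth (par S t') v) v

noncomputable def Uh (S : Finset V) (D : ℕ → Finset V) (kk : ℕ)
    (t' : V → Option (V × ℕ)) (m : ℕ) : Finset V :=
  S.filter fun u => m < tauh S D kk t' u

noncomputable def Fh (a : V → V → ℕ) (S : Finset V) (out : V → Finset V)
    (D : ℕ → Finset V) (kk : ℕ) (t' : V → Option (V × ℕ)) (v : V) : Finset (V × ℕ) :=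
  if (tauh S D kk t' v - 1) % plen S = 0 then
    edgesTo a v (out v) ∪ edgesTo a v (S \ Uh S D kk t' (tauh S D kk t' v - 1))
  else
    edgesTo a v (Uh S D kk t' (tauh S D kk t' v - 2) \ Uh S D kk t' (tauh S D kk t' v - 1))

noncomputable def etah (a : V → V → ℕ) (S : Finset V) (out : V → Finset V)
    (D : ℕ → Finset V) (kk : ℕ) (prec : V → (V × ℕ) → (V × ℕ) → Prop)
    (t' : V → Option (V × ℕ)) (v : V) : ℕ :=
  if v ∈ S then
    match t' v with
    | some ed => (∑ w ∈ Uh S D kk t' (tauh S D kk t' v - 1), a v w) +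
        ((Fh a S out D kk t' v).filter fun f => prec v f ed).card
    | none => 0
  else 0

variable {a : V → V → ℕ} {S : Finset V} {out : V → Finset V}
variable {D : ℕ → Finset V} {kk : ℕ}
variable {prec : V → (V × ℕ) → (V × ℕ) → Prop} {t' : V → Option (V × ℕ)}

lemma tbuild_pos : ∀ n (v : V), 1 ≤ tbuild S D kk t' n v := by
  intro n v
  cases n with
  | zero => exact le_rfl
  | succ n =>
    show 1 ≤ (match t' v with
      | none => 1
      | some ed =>
        if ed.1 ∈ S then max (tbuild S D kk t' n ed.1 + 1) (relv S D kk v + 1)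
        else max 1 (relv S D kk v + 1))
    cases t' v with
    | none => exact le_rfl
    | some ed =>
      by_cases h : ed.1 ∈ S
      · simp only [if_pos h]
        exact le_trans (by omega) (le_max_left _ _)
      · simp only [if_neg h]
        exact le_max_left _ _

lemma tauh_pos (v : V) : 1 ≤ tauh S D kk t' v := tbuild_pos _ _

lemma mem_Uh {u : V} {m : ℕ} : u ∈ Uh S D kk t' m ↔ u ∈ S ∧ m < tauh S D kk t' u :=
  Finset.mem_filter

lemma Uh_subset (m : ℕ) : Uh S D kk t' m ⊆ S := Finset.filter_subset _ _

lemma Uh_anti {m n : ℕ} (h : m ≤ n) : Uh S D kk t' n ⊆ Uh S D kk t' m := by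
  intro u hu
  rw [mem_Uh] at hu ⊢
  exact ⟨hu.1, by omega⟩

section WithTree

variable (ht' : IsSpanningTree a S out t')
include ht'

lemma tbuild_stable :
    ∀ n (v : V), v ∈ S → dpth (par S t') v ≤ n → tbuild S D kk t' n v = tauh S D kk t' v := by
  intro n
  induction n with
  | zero =>
    intro v hv hle
    have := dpth_pos (p := par S t') (ht'.2.2 v hv)
    omega
  | succ n ih =>
    intro v hv hle
    obtain ⟨w, i, hed, -, -⟩ := ht'.2.1 v hv
    obtain ⟨m, hm⟩ : ∃ m, dpth (par S t') v = m + 1 :=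
      ⟨dpth (par S t') v - 1, by have := dpth_pos (p := par S t') (ht'.2.2 v hv); omega⟩
    by_cases hw : w ∈ S
    · have hpar : par S t' v = some w := by
        unfold par
        rw [hed, Option.bind_some, if_pos hw]
      have hd := dpth_parent (ht'.2.2 v hv) hpar
      have hdw : dpth (par S t') w ≤ n := by omega
      show (match t' v with
        | none => 1
        | some ed =>
          if ed.1 ∈ S then max (tbuild S D kk t' n ed.1 + 1) (relv S D kk v + 1)
          else max 1 (relv S D kk v + 1)) = tauh S D kk t' v
      unfold tauh
      rw [hd]
      show _ = (match t' v with
        | none => 1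
        | some ed =>
          if ed.1 ∈ S then max (tbuild S D kk t' (dpth (par S t') w) ed.1 + 1) (relv S D kk v + 1)
          else max 1 (relv S D kk v + 1))
      rw [hed]
      simp only [if_pos hw]
      rw [ih w hw hdw]
      rfl
    · show (match t' v with
        | none => 1
        | some ed =>
          if ed.1 ∈ S then max (tbuild S D kk t' n ed.1 + 1) (relv S D kk v + 1)
          else max 1 (relv S D kk v + 1)) = tauh S D kk t' v
      unfold tauh
      rw [hm]
      show _ = (match t' v with
        | none => 1
        | some ed =>
          if ed.1 ∈ S then max (tbuild S D kk t' m ed.1 + 1) (relv S D kk v + 1)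
          else max 1 (relv S D kk v + 1))
      rw [hed]
      simp only [if_neg hw]

lemma tauh_eq {v : V} (hv : v ∈ S) {ed : V × ℕ} (hed : t' v = some ed) :
    tauh S D kk t' v =
      max ((if ed.1 ∈ S then tauh S D kk t' ed.1 else 0) + 1) (relv S D kk v + 1) := by
  obtain ⟨m, hm⟩ : ∃ m, dpth (par S t') v = m + 1 :=
    ⟨dpth (par S t') v - 1, by have := dpth_pos (p := par S t') (ht'.2.2 v hv); omega⟩
  conv_lhs => rw [tauh, hm]
  show (match t' v with
    | none => 1
    | some ed =>
      if ed.1 ∈ S then max (tbuild S D kk t' m ed.1 + 1) (relv S D kk v + 1)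
      else max 1 (relv S D kk v + 1)) = _
  rw [hed]
  by_cases hw : ed.1 ∈ S
  · simp only [if_pos hw]
    have hpar : par S t' v = some ed.1 := by
      unfold par
      rw [hed, Option.bind_some, if_pos hw]
    have hd := dpth_parent (ht'.2.2 v hv) hpar
    rw [tbuild_stable ht' m ed.1 hw (by omega)]
  · simp only [if_neg hw]

lemma tauh_ge_rel {v : V} (hv : v ∈ S) : relv S D kk v + 1 ≤ tauh S D kk t' v := by
  obtain ⟨w, i, hed, -, -⟩ := ht'.2.1 v hv
  rw [tauh_eq (D := D) (kk := kk) ht' hv hed]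
  exact le_max_right _ _

lemma tauh_mod (hD0 : D 0 = ∅) {v : V} (hv : v ∈ S) :
    1 ≤ tauh S D kk t' v % plen S ∧
      tauh S D kk t' v % plen S ≤ dpth (par S t') v := by
  have hP2 : 2 ≤ plen S := by
    have : 1 ≤ S.card := Finset.card_pos.mpr ⟨v, hv⟩
    rw [show plen S = S.card + 1 from rfl]
    omega
  suffices key : ∀ n (v : V), v ∈ S → dpth (par S t') v ≤ n →
      1 ≤ tauh S D kk t' v % plen S ∧ tauh S D kk t' v % plen S ≤ dpth (par S t') v by
    exact key _ v hv le_rfl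
  intro n
  induction n with
  | zero =>
    intro v hv hle
    have := dpth_pos (p := par S t') (ht'.2.2 v hv)
    omega
  | succ n ih =>
    intro v hv hle
    have hdp := dpth_pos (p := par S t') (ht'.2.2 v hv)
    obtain ⟨w, i, hed, -, -⟩ := ht'.2.1 v hv
    have heq := tauh_eq (D := D) (kk := kk) ht' hv hed
    have hrelmod : (relv S D kk v + 1) % plen S = 1 := by
      obtain ⟨c, hc⟩ := relv_dvd S hD0 (D := D) (kk := kk) v
      rw [hc, Nat.add_comm, Nat.add_mul_mod_self_left, Nat.mod_eq_of_lt (by omega)]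
    rcases max_choice ((if w ∈ S then tauh S D kk t' w else 0) + 1) (relv S D kk v + 1) with
      hmax | hmax
    · rw [hmax] at heq
      by_cases hw : w ∈ S
      · rw [if_pos hw] at heq
        have hpar : par S t' v = some w := by
          unfold par
          rw [hed, Option.bind_some, if_pos hw]
        have hd := dpth_parent (ht'.2.2 v hv) hpar
        have hcard : dpth (par S t') v ≤ S.card :=
          dpth_le_card (fun u x h => (par_some h).choose_spec.2.2) hv (ht'.2.2 v hv)
        obtain ⟨h1, h2⟩ := ih w hw (by omega)
        have hmod : tauh S D kk t' w % plen S + 1 < plen S := by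
          rw [show plen S = S.card + 1 from rfl] at *
          omega
        have : (tauh S D kk t' w + 1) % plen S = tauh S D kk t' w % plen S + 1 := by
          rw [Nat.add_mod, Nat.mod_eq_of_lt (show 1 < plen S by omega),
            Nat.mod_eq_of_lt (by omega)]
        rw [heq, this]
        omega
      · rw [if_neg hw] at heq
        rw [heq, Nat.mod_eq_of_lt (by omega)]
        omega
    · rw [hmax] at heq
      rw [heq, hrelmod]
      omega

lemma tauh_parent_lt {v : V} (hv : v ∈ S) {ed : V × ℕ} (hed : t' v = some ed)
    (hw : ed.1 ∈ S) : tauh S D kk t' ed.1 < tauh S D kk t' v := by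
  have heq := tauh_eq (D := D) (kk := kk) ht' hv hed
  rw [if_pos hw] at heq
  have := le_max_left (tauh S D kk t' ed.1 + 1) (relv S D kk v + 1)
  omega

lemma ed_mem_Fh (hD0 : D 0 = ∅) {v : V} (hv : v ∈ S) {ed : V × ℕ}
    (hed : t' v = some ed) : ed ∈ Fh a S out D kk t' v := by
  obtain ⟨w, i, hed', hlt, hor⟩ := ht'.2.1 v hv
  rw [hed] at hed'
  obtain rfl : ed = (w, i) := by injection hed'
  set T := tauh S D kk t' v with hT
  have hpos : 1 ≤ T := tauh_pos v
  have heq := tauh_eq (D := D) (kk := kk) ht' hv hed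
  rw [← hT] at heq
  by_cases hc : (T - 1) % plen S = 0
  · rw [Fh, ← hT, if_pos hc]
    rcases hor with hw | hw
    · apply Finset.mem_union_right
      rw [mem_edgesTo]
      refine ⟨Finset.mem_sdiff.mpr ⟨hw, ?_⟩, hlt⟩
      rw [mem_Uh]
      have := tauh_parent_lt (D := D) (kk := kk) ht' hv hed hw
      simp only [← hT] at this
      intro hmem
      omega
    · exact Finset.mem_union_left _ ((mem_edgesTo a).mpr ⟨hw, hlt⟩)
  · have hwS : w ∈ S := by
      by_contra hns
      rw [if_neg hns] at heq
      rcases max_choice (0 + 1) (relv S D kk v + 1) with hmax | hmax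
      · rw [hmax] at heq
        rw [heq] at hc
        exact hc (by simp)
      · rw [hmax] at heq
        obtain ⟨c, hcd⟩ := relv_dvd S hD0 (D := D) (kk := kk) v
        apply hc
        rw [heq]
        simp only [Nat.add_sub_cancel, hcd]
        exact Nat.mul_mod_right _ _
    rw [if_pos hwS] at heq
    have hteq : T = tauh S D kk t' w + 1 := by
      rcases max_choice (tauh S D kk t' w + 1) (relv S D kk v + 1) with hmax | hmax
      · rw [hmax] at heq; exact heq
      · rw [hmax] at heq
        exfalso
        obtain ⟨c, hcd⟩ := relv_dvd S hD0 (D := D) (kk := kk) v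
        apply hc
        rw [heq]
        simp only [Nat.add_sub_cancel, hcd]
        exact Nat.mul_mod_right _ _
    rw [Fh, ← hT, if_neg hc]
    rw [mem_edgesTo]
    refine ⟨Finset.mem_sdiff.mpr ⟨?_, ?_⟩, hlt⟩
    · rw [mem_Uh]
      have h1 : 1 ≤ tauh S D kk t' w := tauh_pos w
      exact ⟨hwS, by omega⟩
    · rw [mem_Uh]
      intro hmem
      omega

omit ht' in
lemma filter_prec_lt_card {r : (V × ℕ) → (V × ℕ) → Prop}
    (hto : IsStrictTotalOrder (V × ℕ) r) {F : Finset (V × ℕ)} {ed : V × ℕ}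
    (hed : ed ∈ F) : (F.filter fun f => r f ed).card < F.card := by
  letI := hto
  have hsub : F.filter (fun f => r f ed) ⊆ F.erase ed := by
    intro f hf
    rw [Finset.mem_filter] at hf
    rw [Finset.mem_erase]
    refine ⟨fun he => ?_, hf.1⟩
    rw [he] at hf
    exact absurd hf.2 (irrefl_of r ed)
  have h1 := Finset.card_le_card hsub
  have h2 := Finset.card_erase_of_mem hed
  have h3 : 1 ≤ F.card := Finset.card_pos.mpr ⟨ed, hed⟩
  omega

omit ht' in
lemma etah_def {v : V} (hv : v ∈ S) {ed : V × ℕ} (hed : t' v = some ed) :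
    etah a S out D kk prec t' v =
      (∑ w ∈ Uh S D kk t' (tauh S D kk t' v - 1), a v w) +
        ((Fh a S out D kk t' v).filter fun f => prec v f ed).card := by
  unfold etah
  rw [if_pos hv, hed]

lemma U_eq_Uh (hD0 : D 0 = ∅) (hmono : Monotone D)
    (hprec : ∀ v, IsStrictTotalOrder (V × ℕ) (prec v)) :
    ∀ m, U a S (etah a S out D kk prec t') D kk m = Uh S D kk t' m := by
  intro m
  induction m with
  | zero =>
    rw [U_zero]
    symm
    exact Finset.filter_true_of_mem fun u hu => tauh_pos u
  | succ m ih =>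
    rw [U_succ, ih]
    ext u
    rw [Finset.mem_filter, mem_Uh, mem_Uh]
    constructor
    · rintro ⟨⟨huS, hum⟩, hcond⟩
      refine ⟨huS, ?_⟩
      by_contra hle
      have hT : tauh S D kk t' u = m + 1 := by omega
      obtain ⟨w, i, hed, -, -⟩ := ht'.2.1 u huS
      have hrel : relv S D kk u + 1 ≤ m + 1 := by
        have := tauh_ge_rel (D := D) (kk := kk) ht' huS
        omega
      have hfree : u ∉ D (kk - m / plen S) := relv_free S hD0 hmono (by omega)
      rcases hcond with h | h
      · exact hfree h
      · have hdef := etah_def (a := a) (out := out) (D := D) (kk := kk) (prec := prec) huS hed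
        rw [hT] at hdef
        simp only [Nat.add_sub_cancel] at hdef
        rw [hdef] at h
        omega
    · rintro ⟨huS, hum⟩
      refine ⟨⟨huS, by omega⟩, ?_⟩
      by_contra hcon
      push_neg at hcon
      obtain ⟨hfree, hge⟩ := hcon
      obtain ⟨w, i, hed, -, -⟩ := ht'.2.1 u huS
      set T := tauh S D kk t' u with hT
      have heq := tauh_eq (D := D) (kk := kk) ht' huS hed
      rw [← hT] at heq
      by_cases hc : (T - 1) % plen S = 0
      · have hTrel : T = relv S D kk u + 1 := by
          rcases max_choice ((if (w, i).1 ∈ S then tauh S D kk t' (w, i).1 else 0) + 1)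
            (relv S D kk u + 1) with hmax | hmax
          · rw [hmax] at heq
            by_cases hw : w ∈ S
            · simp only [if_pos hw] at heq
              have hmw := tauh_mod (D := D) (kk := kk) ht' hD0 hw
              have hzero : tauh S D kk t' w % plen S = 0 := by
                rw [heq] at hc
                simpa using hc
              omega
            · simp only [if_neg hw] at heq
              omega
          · rw [hmax] at heq
            exact heq
        have hmlt : m < relv S D kk u := by omega
        exact hfree (relv_forb S hmlt)
      · have hT2 : m + 2 ≤ T := by omega
        have hedF := ed_mem_Fh (D := D) (kk := kk) ht' hD0 huS hed
        have hl := filter_prec_lt_card (hprec u) hedF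
        have hFc : (Fh a S out D kk t' u).card =
            ∑ w ∈ Uh S D kk t' (T - 2) \ Uh S D kk t' (T - 1), a u w := by
          rw [Fh, ← hT, if_neg hc, edgesTo_card]
        have hdef := etah_def (a := a) (out := out) (D := D) (kk := kk) (prec := prec) huS hed
        rw [← hT] at hdef
        have hsub1 : Uh S D kk t' (T - 1) ⊆ Uh S D kk t' (T - 2) := Uh_anti (by omega)
        have hsplit : (∑ w ∈ Uh S D kk t' (T - 2) \ Uh S D kk t' (T - 1), a u w) +
            ∑ w ∈ Uh S D kk t' (T - 1), a u w = ∑ w ∈ Uh S D kk t' (T - 2), a u w :=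
          Finset.sum_sdiff hsub1
        have hsub2 : Uh S D kk t' (T - 2) ⊆ Uh S D kk t' m := Uh_anti (by omega)
        have hmono2 : ∑ w ∈ Uh S D kk t' (T - 2), a u w ≤ ∑ w ∈ Uh S D kk t' m, a u w :=
          Finset.sum_le_sum_of_subset hsub2
        rw [hdef] at hge
        omega

lemma tau_eq_tauh (hD0 : D 0 = ∅) (hmono : Monotone D)
    (hprec : ∀ v, IsStrictTotalOrder (V × ℕ) (prec v)) {v : V} (hv : v ∈ S) :
    τ a S (etah a S out D kk prec t') D kk v = tauh S D kk t' v := by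
  have hU := U_eq_Uh (kk := kk) ht' hD0 hmono hprec
  unfold τ
  have hset : {m | v ∉ U a S (etah a S out D kk prec t') D kk m} =
      {m | tauh S D kk t' v ≤ m} := by
    ext m
    simp only [Set.mem_setOf_eq, hU m, mem_Uh, not_and, not_lt]
    exact ⟨fun h => h hv, fun h _ => h⟩
  rw [hset]
  refine le_antisymm (Nat.sInf_le (Set.mem_setOf_eq ▸ le_rfl)) ?_
  exact le_csInf ⟨tauh S D kk t' v, Set.mem_setOf_eq ▸ le_rfl⟩ fun b hb => hb

lemma spec_etah (hD0 : D 0 = ∅) (hmono : Monotone D)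
    (hprec : ∀ v, IsStrictTotalOrder (V × ℕ) (prec v)) :
    Spec a S out (etah a S out D kk prec t') D kk prec t' := by
  refine ⟨ht'.1, fun v hv => ?_⟩
  obtain ⟨w, i, hed, hlt, hor⟩ := ht'.2.1 v hv
  have hτ := tau_eq_tauh (kk := kk) ht' hD0 hmono hprec hv
  have hU := U_eq_Uh (kk := kk) ht' hD0 hmono hprec
  have hFv : Fv a S out (etah a S out D kk prec t') D kk v = Fh a S out D kk t' v := by
    simp only [Fv, Fh, hτ, hU]
  have hsd : (∑ w ∈ S \ Uh S D kk t' (tauh S D kk t' v - 1), a v w) +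
      ∑ w ∈ Uh S D kk t' (tauh S D kk t' v - 1), a v w = ∑ w ∈ S, a v w :=
    Finset.sum_sdiff (Uh_subset _)
  have hmv : mv a S out (etah a S out D kk prec t') D kk v +
      ∑ w ∈ Uh S D kk t' (tauh S D kk t' v - 1), a v w = degS a S out v := by
    simp only [mv, hτ, hU, degS]
    omega
  refine ⟨(w, i), hed, ?_, ?_⟩
  · rw [hFv]
    exact ed_mem_Fh (D := D) (kk := kk) ht' hD0 hv hed
  · rw [hFv, etah_def (a := a) (out := out) (D := D) (kk := kk) (prec := prec) hv hed]
    omega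

lemma recurrent_etah (hD0 : D 0 = ∅) (hmono : Monotone D)
    (hdisj : ∀ v w, w ∈ out v → w ∉ S)
    (hprec : ∀ v, IsStrictTotalOrder (V × ℕ) (prec v)) :
    Recurrent a S out (etah a S out D kk prec t') := by
  constructor
  · -- Stable
    intro v hv
    obtain ⟨w, i, hed, hlt, hor⟩ := ht'.2.1 v hv
    set T := tauh S D kk t' v with hT
    have hedF := ed_mem_Fh (D := D) (kk := kk) ht' hD0 hv hed
    have hl := filter_prec_lt_card (hprec v) hedF
    have hdef := etah_def (a := a) (out := out) (D := D) (kk := kk) (prec := prec) hv hed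
    rw [← hT] at hdef
    have hsd : (∑ w ∈ S \ Uh S D kk t' (T - 1), a v w) +
        ∑ w ∈ Uh S D kk t' (T - 1), a v w = ∑ w ∈ S, a v w :=
      Finset.sum_sdiff (Uh_subset _)
    have hdeg : degS a S out v = sk a out v + ∑ w ∈ S, a v w := rfl
    by_cases hc : (T - 1) % plen S = 0
    · have hdisjoint : Disjoint (edgesTo a v (out v))
          (edgesTo a v (S \ Uh S D kk t' (T - 1))) := by
        rw [Finset.disjoint_left]
        intro f hf1 hf2
        rw [mem_edgesTo'] at hf1 hf2
        exact hdisj v f.1 hf1.1 (Finset.mem_sdiff.mp hf2.1).1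
      have hFc : (Fh a S out D kk t' v).card =
          sk a out v + ∑ w ∈ S \ Uh S D kk t' (T - 1), a v w := by
        rw [Fh, ← hT, if_pos hc, Finset.card_union_of_disjoint hdisjoint,
          edgesTo_card, edgesTo_card]
        rfl
      omega
    · have hFc : (Fh a S out D kk t' v).card =
          ∑ w ∈ Uh S D kk t' (T - 2) \ Uh S D kk t' (T - 1), a v w := by
        rw [Fh, ← hT, if_neg hc, edgesTo_card]
      have hsub1 : Uh S D kk t' (T - 1) ⊆ Uh S D kk t' (T - 2) := Uh_anti (by omega)
      have hsplit : (∑ w ∈ Uh S D kk t' (T - 2) \ Uh S D kk t' (T - 1), a v w) +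
          ∑ w ∈ Uh S D kk t' (T - 1), a v w = ∑ w ∈ Uh S D kk t' (T - 2), a v w :=
        Finset.sum_sdiff hsub1
      have hmono2 : ∑ w ∈ Uh S D kk t' (T - 2), a v w ≤ ∑ w ∈ S, a v w :=
        Finset.sum_le_sum_of_subset (Uh_subset _)
      omega
  · -- Ample
    intro F hFS hFne
    obtain ⟨x, hxF, hmin⟩ := Finset.exists_min_image F (fun u => tauh S D kk t' u) hFne
    have hxS := hFS hxF
    obtain ⟨w, i, hed, -, -⟩ := ht'.2.1 x hxS
    have hsub : F ⊆ Uh S D kk t' (tauh S D kk t' x - 1) := by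
      intro y hy
      rw [mem_Uh]
      have h1 := hmin y hy
      have h2 := tauh_pos (S := S) (D := D) (kk := kk) (t' := t') x
      exact ⟨hFS hy, by omega⟩
    have h1 : ∑ y ∈ F, a x y ≤ ∑ y ∈ Uh S D kk t' (tauh S D kk t' x - 1), a x y :=
      Finset.sum_le_sum_of_subset hsub
    refine ⟨x, hxF, ?_⟩
    rw [etah_def (a := a) (out := out) (D := D) (kk := kk) (prec := prec) hxS hed]
    omega

end WithTree

end Build

section LemmaR

set_option linter.unusedSectionVars false

variable {V : Type*} [DecidableEq V]

/-- restriction lemma : the restriction of a global anchored pair to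
`W = desc_t (D k)` satisfies the `W`-Spec with the same configuration -/
theorem lemmaR
    (a : V → V → ℕ) (nbrs : V → Finset V)
    (hnbrs : ∀ v w, w ∈ nbrs v ↔ 0 < a v w)
    (D : ℕ → Finset V) (hmono : Monotone D) (hD0 : D 0 = ∅)
    (prec : V → (V × ℕ) → (V × ℕ) → Prop)
    (Λ : Finset V) (K : ℕ)
    (outΛ : V → Finset V) (houtΛ : ∀ v, outΛ v = nbrs v \ Λ)
    (η : V → ℕ) (t : V → Option (V × ℕ))
    (hA : Ample a Λ η)
    (ht : IsSpanningTree a Λ outΛ t)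
    (hspec : Spec a Λ outΛ η D K prec t)
    (k : ℕ) (hk1 : 1 ≤ k) (hkK : k ≤ K)
    (W : Finset V) (hWΛ : W ⊆ Λ)
    (hW : ∀ x, x ∈ W ↔ ∃ m u, iterP (par Λ t) m x = some u ∧ u ∈ D k)
    (outW : V → Finset V)
    (houtW : ∀ v, outW v = if v ∈ D k then nbrs v \ W else ∅) :
    Spec a W outW η D k prec (fun v => if v ∈ W then t v else none) := by
  classical
  obtain ⟨qm, hqm⟩ : ∃ qm, K = k + qm := ⟨K - k, by omega⟩
  have hP1 : 0 < plen Λ := plen_pos Λ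
  have hQ1 : 0 < plen W := plen_pos W
  have hPcard : plen Λ = Λ.card + 1 := rfl
  have hQcard : plen W = W.card + 1 := rfl
  have hQP : plen W ≤ plen Λ := by
    have := Finset.card_le_card hWΛ
    omega
  have hdisjΛ : ∀ v w, w ∈ outΛ v → w ∉ Λ := by
    intro v w hw
    rw [houtΛ] at hw
    exact (Finset.mem_sdiff.mp hw).2
  -- Step A : anchors of `D k` are released only at phase `qm + 1`
  have hrelDk : ∀ u ∈ D k, plen Λ * (qm + 1) ≤ relv Λ D K u := by
    intro u hu
    by_contra hlt
    push_neg at hlt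
    have h1 : relv Λ D K u ≤ plen Λ * (qm + 1) - 1 := by omega
    have h2 := relv_free Λ hD0 hmono h1
    have h3 : (plen Λ * (qm + 1) - 1) / plen Λ = qm := by
      rw [show plen Λ * (qm + 1) - 1 = plen Λ * qm + (plen Λ - 1) by ring_nf; omega,
        Nat.mul_add_div hP1, Nat.div_eq_of_lt (by omega)]
      omega
    rw [h3] at h2
    exact h2 (hmono (by omega) hu)
  -- Step B : burning times along ancestries
  have hanc : ∀ m (x u : V), x ∈ Λ → iterP (par Λ t) m x = some u →
      u ∈ Λ ∧ τ a Λ η D K u ≤ τ a Λ η D K x := by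
    intro m
    induction m with
    | zero =>
      intro x u hx h
      obtain rfl : x = u := by simpa [iterP] using h
      exact ⟨hx, le_rfl⟩
    | succ m ih =>
      intro x u hx h
      rw [show m + 1 = 1 + m by ring, iterP_add, iterP_one] at h
      cases hp : par Λ t x with
      | none => rw [hp] at h; exact absurd h (by simp)
      | some w =>
        rw [hp, Option.bind_some] at h
        obtain ⟨ed, hed, hed1, hwΛ⟩ := par_some hp
        have hcd := claimD hD0 hmono hA hdisjΛ hspec hx hed
        rw [hed1, if_pos hwΛ] at hcd
        have h2 := ih w u hwΛ h
        refine ⟨h2.1, ?_⟩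
        have := le_max_left (τ a Λ η D K w + 1) (relv Λ D K x + 1)
        omega
  -- Step C : W = vertices burning after phase qm+1
  have hE2 : ∀ x, x ∈ W ↔ x ∈ Λ ∧ plen Λ * (qm + 1) < τ a Λ η D K x := by
    intro x
    constructor
    · intro hx
      obtain ⟨m, u, hit, huk⟩ := (hW x).mp hx
      have hxΛ := hWΛ hx
      obtain ⟨huΛ, hle⟩ := hanc m x u hxΛ hit
      have h1 := relv_le_tau hD0 hA huΛ (D := D) (kk := K)
      have h2 := hrelDk u huk
      exact ⟨hxΛ, by omega⟩
    · rintro ⟨hxΛ, hτ⟩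
      by_contra hxW
      have hWneg : ∀ m u, iterP (par Λ t) m x = some u → u ∉ D k :=
        fun m u hit huk => hxW ((hW x).mpr ⟨m, u, hit, huk⟩)
      have hdepth : ∀ n (y : V), y ∈ Λ → dpth (par Λ t) y ≤ n →
          (∀ m u, iterP (par Λ t) m y = some u → u ∉ D k) →
          τ a Λ η D K y ≤ plen Λ * qm + dpth (par Λ t) y := by
        intro n
        induction n with
        | zero =>
          intro y hy hdn _
          have := dpth_pos (p := par Λ t) (ht.2.2 y hy)
          omega
        | succ n ih =>
          intro y hy hdn hav
          obtain ⟨w, i, hed, -, -⟩ := ht.2.1 y hy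
          have hcd := claimD hD0 hmono hA hdisjΛ hspec hy hed
          have hdp := dpth_pos (p := par Λ t) (ht.2.2 y hy)
          have hrely : relv Λ D K y ≤ plen Λ * qm := by
            have hyk : y ∉ D k := hav 0 y (by simp [iterP])
            have hfree : y ∉ D (K - (plen Λ * qm) / plen Λ) := by
              rw [Nat.mul_div_cancel_left _ hP1, hqm, show k + qm - qm = k by omega]
              exact hyk
            exact Nat.sInf_le hfree
          by_cases hwΛ : w ∈ Λ
          · have hpar : par Λ t y = some w := by
              unfold par
              rw [hed, Option.bind_some]
              simp only [if_pos hwΛ]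
            have hdpar := dpth_parent (ht.2.2 y hy) hpar
            have hanc' : ∀ m u, iterP (par Λ t) m w = some u → u ∉ D k := by
              intro m u hit
              apply hav (m + 1) u
              rw [show m + 1 = 1 + m by ring, iterP_add, iterP_one, hpar, Option.bind_some]
              exact hit
            have hihw := ih w hwΛ (by omega) hanc'
            simp only [if_pos hwΛ] at hcd
            omega
          · simp only [if_neg hwΛ] at hcd
            omega
      have hdx := hdepth (dpth (par Λ t) x) x hxΛ le_rfl hWneg
      have hcard := dpth_le_card (p := par Λ t) (S := Λ)
        (fun u w h => (par_some h).choose_spec.2.2) hxΛ (ht.2.2 x hxΛ)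
      have hfin : plen Λ * (qm + 1) = plen Λ * qm + plen Λ := by ring
      omega
  have hWU : W = U a Λ η D K (plen Λ * (qm + 1)) := by
    ext x
    rw [hE2 x]
    constructor
    · rintro ⟨h1, h2⟩
      exact (mem_U_iff hD0 hA).mpr h2
    · intro h
      refine ⟨U_subset a Λ η D K _ h, (mem_U_iff hD0 hA).mp h⟩
  -- Step E : stabilization property of W
  have hpe := U_phase_end (a := a) (S := Λ) (η := η) (D := D) (kk := K) qm
  have hsets : U a Λ η D K (plen Λ * qm + (plen Λ - 1)) = W := by
    rw [← hpe, show plen Λ * qm + plen Λ = plen Λ * (qm + 1) by ring, ← hWU]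
  have hSP : ∀ v ∈ W, v ∉ D k → η v < ∑ w ∈ W, a v w := by
    intro v hvW hvk
    have hv1 : v ∈ U a Λ η D K (plen Λ * (qm + 1)) := by rw [← hWU]; exact hvW
    have hv2 : v ∈ U a Λ η D K ((plen Λ * qm + (plen Λ - 1)) + 1) := by
      rw [show plen Λ * qm + (plen Λ - 1) + 1 = plen Λ * (qm + 1) by ring_nf; omega]
      exact hv1
    rw [U_succ, Finset.mem_filter] at hv2
    have hdiv : (plen Λ * qm + (plen Λ - 1)) / plen Λ = qm := by
      rw [Nat.mul_add_div hP1, Nat.div_eq_of_lt (by omega)]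
      omega
    rcases hv2.2 with h | h
    · rw [hdiv, hqm, show k + qm - qm = k by omega] at h
      exact absurd h hvk
    · rw [hsets] at h
      exact h
  -- Step F : correspondence of the two processes
  have hstep : ∀ n n', U a W η D k n = U a Λ η D K n' →
      k - n / plen W = K - n' / plen Λ →
      U a W η D k (n + 1) = U a Λ η D K (n' + 1) := by
    intro n n' hU hidx
    rw [U_succ, U_succ, hU, hidx]
  have hE3a : ∀ r, r ≤ plen W → U a W η D k r = W := by
    intro r hr
    induction r with
    | zero => rfl
    | succ r ih =>
      rw [U_succ, ih (by omega)]
      apply Finset.filter_true_of_mem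
      intro v hvW
      by_cases hvk : v ∈ D k
      · left
        rw [Nat.div_eq_of_lt (by omega), Nat.sub_zero]
        exact hvk
      · right
        exact hSP v hvW hvk
  have hbridge : ∀ j, U a Λ η D K (plen Λ * (qm + 1 + j)) ⊆ W →
      (∀ x, plen W - 1 ≤ x → x ≤ plen Λ →
        U a Λ η D K (plen Λ * (qm + 1 + j) + x) =
          U a Λ η D K (plen Λ * (qm + 1 + j) + (plen W - 1))) := by
    intro j hsubW
    obtain ⟨r₀, hr₀, heq₀⟩ := U_exists_stab a Λ η D K (plen Λ * (qm + 1 + j)) (plen W - 1)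
      (le_trans (Finset.card_le_card hsubW) (by omega))
    have hconst : ∀ x, r₀ ≤ x → x ≤ plen Λ →
        U a Λ η D K (plen Λ * (qm + 1 + j) + x) =
          U a Λ η D K (plen Λ * (qm + 1 + j) + r₀) := by
      intro x hx hxP
      rcases Nat.eq_or_lt_of_le hx with rfl | hlt
      · rfl
      · have hper := U_persist a Λ η D K (n := plen Λ * (qm + 1 + j) + r₀) heq₀
          (x - r₀ - 1) (by
            rw [show plen Λ * (qm + 1 + j) + r₀ + (x - r₀ - 1) =
              plen Λ * (qm + 1 + j) + (x - 1) by omega,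
              Nat.mul_add_div hP1, Nat.mul_add_div hP1,
              Nat.div_eq_of_lt (show x - 1 < plen Λ by omega),
              Nat.div_eq_of_lt (show r₀ < plen Λ by omega)])
        rw [show plen Λ * (qm + 1 + j) + r₀ + (x - r₀ - 1) + 1 =
          plen Λ * (qm + 1 + j) + x by omega] at hper
        exact hper
    intro x hx hxP
    rw [hconst x (by omega) hxP, hconst (plen W - 1) (by omega) (by omega)]
  have hsubWj : ∀ j, U a Λ η D K (plen Λ * (qm + 1 + j)) ⊆ W := by
    intro j
    rw [hWU]
    exact U_anti a Λ η D K (Nat.mul_le_mul_left (plen Λ) (by omega))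
  have hinner : ∀ j, U a W η D k (plen W * (j + 1)) = U a Λ η D K (plen Λ * (qm + 1 + j)) →
      ∀ r, r ≤ plen W →
        U a W η D k (plen W * (j + 1) + r) = U a Λ η D K (plen Λ * (qm + 1 + j) + r) := by
    intro j h0 r hr
    induction r with
    | zero => simpa using h0
    | succ r ihr =>
      have hprev := ihr (by omega)
      have hidx : k - (plen W * (j + 1) + r) / plen W =
          K - (plen Λ * (qm + 1 + j) + r) / plen Λ := by
        rw [Nat.mul_add_div hQ1, Nat.mul_add_div hP1,
          Nat.div_eq_of_lt (show r < plen W by omega),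
          Nat.div_eq_of_lt (show r < plen Λ by omega)]
        omega
      have hst := hstep _ _ hprev hidx
      rw [show plen W * (j + 1) + r + 1 = plen W * (j + 1) + (r + 1) by ring,
        show plen Λ * (qm + 1 + j) + r + 1 = plen Λ * (qm + 1 + j) + (r + 1) by ring] at hst
      exact hst
  have houter : ∀ j, U a W η D k (plen W * (j + 1)) = U a Λ η D K (plen Λ * (qm + 1 + j)) := by
    intro j
    induction j with
    | zero =>
      rw [show plen W * (0 + 1) = plen W by ring, hE3a (plen W) le_rfl, hWU]
    | succ j ihj =>
      have hin := hinner j ihj (plen W) le_rfl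
      have hbr := hbridge j (hsubWj j)
      have h1 : U a Λ η D K (plen Λ * (qm + 1 + j) + plen W) =
          U a Λ η D K (plen Λ * (qm + 1 + j) + plen Λ) := by
        rw [hbr (plen W) (by omega) hQP, hbr (plen Λ) (by omega) le_rfl]
      rw [show plen W * (j + 1 + 1) = plen W * (j + 1) + plen W by ring, hin, h1,
        show plen Λ * (qm + 1 + j) + plen Λ = plen Λ * (qm + 1 + (j + 1)) by ring]
  have hE3 : ∀ j r, r ≤ plen W →
      U a W η D k (plen W * (j + 1) + r) = U a Λ η D K (plen Λ * (qm + 1 + j) + r) :=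
    fun j r hr => hinner j (houter j) r hr
  -- Step G : burning-time correspondence
  have hτcorr : ∀ v ∈ W, ∃ j s, s + 2 ≤ plen W ∧
      τ a Λ η D K v = plen Λ * (qm + 1 + j) + s + 1 ∧
      τ a W η D k v = plen W * (j + 1) + s + 1 := by
    intro v hvW
    have hgt : plen Λ * (qm + 1) < τ a Λ η D K v := ((hE2 v).mp hvW).2
    set T := τ a Λ η D K v with hTdef
    have hdm := Nat.div_add_mod (T - 1) (plen Λ)
    have hdged : qm + 1 ≤ (T - 1) / plen Λ := by
      rw [Nat.le_div_iff_mul_le hP1, Nat.mul_comm]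
      omega
    set j := (T - 1) / plen Λ - (qm + 1) with hjdef
    set s := (T - 1) % plen Λ with hsdef
    have hTj : T - 1 = plen Λ * (qm + 1 + j) + s := by
      rw [show qm + 1 + j = (T - 1) / plen Λ by omega]
      omega
    have hsP : s < plen Λ := Nat.mod_lt _ hP1
    have hbr := hbridge j (hsubWj j)
    have hsQ : s + 2 ≤ plen W := by
      by_contra hbig
      push_neg at hbig
      have hv1 : v ∈ U a Λ η D K (T - 1) := (mem_U_iff hD0 hA).mpr (by omega)
      have hv2 := notMem_U_tau hD0 hA (D := D) (kk := K) v
      rw [← hTdef, show T = plen Λ * (qm + 1 + j) + (s + 1) by omega,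
        hbr (s + 1) (by omega) (by omega)] at hv2
      rw [show T - 1 = plen Λ * (qm + 1 + j) + s by omega,
        hbr s (by omega) (by omega)] at hv1
      exact hv2 hv1
    refine ⟨j, s, hsQ, by omega, ?_⟩
    have hmem1 : v ∈ U a W η D k (plen W * (j + 1) + s) := by
      rw [hE3 j s (by omega), show plen Λ * (qm + 1 + j) + s = T - 1 by omega]
      exact (mem_U_iff hD0 hA).mpr (by omega)
    have hmem2 : v ∉ U a W η D k (plen W * (j + 1) + s + 1) := by
      rw [show plen W * (j + 1) + s + 1 = plen W * (j + 1) + (s + 1) by ring,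
        hE3 j (s + 1) (by omega),
        show plen Λ * (qm + 1 + j) + (s + 1) = T by omega]
      exact notMem_U_tau hD0 hA v
    exact tau_eq_of hmem1 hmem2
  -- Step H : transfer of the Spec data
  refine ⟨fun v hv => by simp [hv], fun v hv => ?_⟩
  obtain ⟨j, s, hsQ, hTΛ, hTW⟩ := hτcorr v hv
  have hvΛ := hWΛ hv
  obtain ⟨ed, hed, hFΛ, heqΛ⟩ := hspec.2 v hvΛ
  have hQ2 : 2 ≤ plen W := by
    have : 1 ≤ W.card := Finset.card_pos.mpr ⟨v, hv⟩
    omega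
  have hBeq : U a W η D k (plen W * (j + 1) + s) = U a Λ η D K (plen Λ * (qm + 1 + j) + s) :=
    hE3 j s (by omega)
  have hFveq : Fv a W outW η D k v = Fv a Λ outΛ η D K v := by
    rcases Nat.eq_zero_or_pos s with rfl | hs1
    · -- phase start
      have hmodW : (τ a W η D k v - 1) % plen W = 0 := by
        rw [hTW]
        simp [Nat.mul_mod_right]
      have hmodΛ : (τ a Λ η D K v - 1) % plen Λ = 0 := by
        rw [hTΛ]
        simp [Nat.mul_mod_right]
      have hvDk : v ∈ D k := by
        have hq' : τ a Λ η D K v = (qm + 1 + j) * plen Λ + 1 := by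
          rw [hTΛ]; ring
        have hCC := (claimC hD0 hmono hA hvΛ hq').2 (by omega)
        refine hmono ?_ hCC.2
        omega
      have hBsubW : U a Λ η D K (plen Λ * (qm + 1 + j)) ⊆ W := hsubWj j
      have hidxW : τ a W η D k v - 1 = plen W * (j + 1) := by rw [hTW]; omega
      have hidxΛ : τ a Λ η D K v - 1 = plen Λ * (qm + 1 + j) := by rw [hTΛ]; omega
      rw [Fv, Fv, if_pos hmodW, if_pos hmodΛ, hidxW, hidxΛ]
      rw [show plen W * (j + 1) = plen W * (j + 1) + 0 by ring,
        show plen Λ * (qm + 1 + j) = plen Λ * (qm + 1 + j) + 0 by ring]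
      rw [hE3 j 0 (by omega)]
      rw [← edgesTo_union, ← edgesTo_union]
      apply edgesTo_congr
      intro w hw
      have hwn : w ∈ nbrs v := (hnbrs v w).mpr hw
      have hBΛ : ∀ x, x ∈ U a Λ η D K (plen Λ * (qm + 1 + j) + 0) → x ∈ Λ :=
        fun x hx => U_subset a Λ η D K _ hx
      have hBW : ∀ x, x ∈ U a Λ η D K (plen Λ * (qm + 1 + j) + 0) → x ∈ W := by
        intro x hx
        apply hBsubW
        rw [show plen Λ * (qm + 1 + j) = plen Λ * (qm + 1 + j) + 0 by ring]
        exact hx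
      rw [houtW v, if_pos hvDk, houtΛ v]
      simp only [Finset.mem_union, Finset.mem_sdiff]
      constructor
      · rintro (⟨-, hnW⟩ | ⟨hWm, hnB⟩)
        · by_cases hB : w ∈ U a Λ η D K (plen Λ * (qm + 1 + j) + 0)
          · exact absurd (hBW w hB) hnW
          · by_cases hL : w ∈ Λ
            · exact Or.inr ⟨hL, hB⟩
            · exact Or.inl ⟨hwn, hL⟩
        · exact Or.inr ⟨hWΛ hWm, hnB⟩
      · rintro (⟨-, hnL⟩ | ⟨hLm, hnB⟩)
        · by_cases hWm : w ∈ W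
          · exact absurd (hWΛ hWm) hnL
          · exact Or.inl ⟨hwn, hWm⟩
        · by_cases hWm : w ∈ W
          · exact Or.inr ⟨hWm, hnB⟩
          · exact Or.inl ⟨hwn, hWm⟩
    · -- mid phase
      have hmodW : (τ a W η D k v - 1) % plen W = s := by
        rw [hTW, show plen W * (j + 1) + s + 1 - 1 = plen W * (j + 1) + s by omega,
          Nat.mul_add_mod, Nat.mod_eq_of_lt (by omega)]
      have hmodΛ : (τ a Λ η D K v - 1) % plen Λ = s := by
        rw [hTΛ, show plen Λ * (qm + 1 + j) + s + 1 - 1 = plen Λ * (qm + 1 + j) + s by omega,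
          Nat.mul_add_mod, Nat.mod_eq_of_lt (by omega)]
      have hidxW1 : τ a W η D k v - 1 = plen W * (j + 1) + s := by rw [hTW]; omega
      have hidxΛ1 : τ a Λ η D K v - 1 = plen Λ * (qm + 1 + j) + s := by rw [hTΛ]; omega
      have hidxW2 : τ a W η D k v - 2 = plen W * (j + 1) + (s - 1) := by
        rw [hTW]; omega
      have hidxΛ2 : τ a Λ η D K v - 2 = plen Λ * (qm + 1 + j) + (s - 1) := by
        rw [hTΛ]; omega
      rw [Fv, Fv, if_neg (by rw [hmodW]; omega), if_neg (by rw [hmodΛ]; omega),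
        hidxW1, hidxΛ1, hidxW2, hidxΛ2, hE3 j s (by omega), hE3 j (s - 1) (by omega)]
  -- the counting identity
  have hmvW := mv_add_sum (a := a) (S := W) (out := outW) (η := η) (D := D) (kk := k) v
  have hmvΛ := mv_add_sum (a := a) (S := Λ) (out := outΛ) (η := η) (D := D) (kk := K) v
  have hsums : ∑ w ∈ U a W η D k (τ a W η D k v - 1), a v w =
      ∑ w ∈ U a Λ η D K (τ a Λ η D K v - 1), a v w := by
    rw [show τ a W η D k v - 1 = plen W * (j + 1) + s by rw [hTW]; omega,
      show τ a Λ η D K v - 1 = plen Λ * (qm + 1 + j) + s by rw [hTΛ]; omega, hBeq]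
  refine ⟨ed, ?_, by rw [hFveq]; exact hFΛ, ?_⟩
  · show (if v ∈ W then t v else none) = some ed
    rw [if_pos hv]
    exact hed
  rw [hFveq]
  omega

end LemmaR

end Anchored











/-- For finite simply connected `W ⊇ D k` and any `Λ ⊇ W`,
if `t` is the spanning tree `φ_{D,Λ} η` of the wired graph `G_Λ` and
`desc_t (D k) = W`, then: (a) the restriction `t_{W,k}` of `t` to the edges of
`E*_{W,k}` is a spanning tree of `G*_{W,k}`; (b) `η|_W` determines `t_{W,k}`
in a way independent of `Λ`; and (c) the resulting map `η_W ↦ t_{W,k}` is a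
bijection from `R_{G*_{W,k}}` onto `T_{G*_{W,k}}`. -/
theorem stmt19 {V : Type*} [DecidableEq V] [Infinite V]
    (a : V → V → ℕ) (nbrs : V → Finset V)
    (hsymm : ∀ u v, a u v = a v u) (hloop : ∀ v, a v v = 0)
    (hnbrs : ∀ v w, w ∈ nbrs v ↔ 0 < a v w)
    (hlf : ∀ v, {w | 0 < a v w}.Finite)
    (hconn : ∀ u v : V, Anchored.ReachAvoid a ∅ u v)
    (D : ℕ → Finset V) (hmono : Monotone D) (hD0 : D 0 = ∅)
    (hcover : ∀ v, ∃ j, v ∈ D j)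
    (hsc : ∀ j, 1 ≤ j → ∀ v ∉ D j, {w | Anchored.ReachAvoid a (D j) v w}.Infinite)
    (prec : V → (V × ℕ) → (V × ℕ) → Prop)
    (hprec : ∀ v, IsStrictTotalOrder (V × ℕ) (prec v))
    -- the finite volume Λ and its wired graph G_Λ
    (Λ : Finset V) (K : ℕ) (hK : D K ⊆ Λ) (hKmax : ∀ j, D j ⊆ Λ → j ≤ K)
    (outΛ : V → Finset V) (houtΛ : ∀ v, outΛ v = nbrs v \ Λ)
    -- the pair η, t = φ_{D,Λ}(η)
    (η : V → ℕ) (t : V → Option (V × ℕ))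
    (hrec : Anchored.Recurrent a Λ outΛ η)
    (ht : Anchored.IsSpanningTree a Λ outΛ t)
    (hspec : Anchored.Spec a Λ outΛ η D K prec t)
    -- the set W = desc_t(D k), assumed simply connected, with D k ⊆ W ⊆ Λ
    (k : ℕ) (hk1 : 1 ≤ k) (hkK : k ≤ K)
    (W : Finset V) (hDkW : D k ⊆ W) (hWΛ : W ⊆ Λ)
    (hWsc : ∀ v ∉ W, {w | Anchored.ReachAvoid a W v w}.Infinite)
    (hW : ∀ x, x ∈ W ↔ ∃ (m : ℕ) (u : V),
      Anchored.iterP (Anchored.par Λ t) m x = some u ∧ u ∈ D k)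
    -- the graph G*_{W,k}: sink edges from D k to V \ W
    (outW : V → Finset V)
    (houtW : ∀ v, outW v = if v ∈ D k then nbrs v \ W else ∅) :
    -- (a) the restriction t_{W,k} is a spanning tree of G*_{W,k}
    Anchored.IsSpanningTree a W outW (fun v => if v ∈ W then t v else none) ∧
    -- (b) η|_W determines t_{W,k}, independently of Λ
    (∀ (Λ₂ : Finset V) (K₂ : ℕ), D K₂ ⊆ Λ₂ → (∀ j, D j ⊆ Λ₂ → j ≤ K₂) → k ≤ K₂ →
      ∀ (outΛ₂ : V → Finset V), (∀ v, outΛ₂ v = nbrs v \ Λ₂) →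
      ∀ (η₂ : V → ℕ) (t₂ : V → Option (V × ℕ)),
        Anchored.Recurrent a Λ₂ outΛ₂ η₂ →
        Anchored.IsSpanningTree a Λ₂ outΛ₂ t₂ →
        Anchored.Spec a Λ₂ outΛ₂ η₂ D K₂ prec t₂ →
        W ⊆ Λ₂ →
        (∀ x, x ∈ W ↔ ∃ (m : ℕ) (u : V),
          Anchored.iterP (Anchored.par Λ₂ t₂) m x = some u ∧ u ∈ D k) →
        (∀ v ∈ W, η₂ v = η v) →
        (fun v => if v ∈ W then t₂ v else none)
          = (fun v => if v ∈ W then t v else none)) ∧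
    -- (c) the map η_W ↦ t_{W,k} is a bijection R_{G*_{W,k}} → T_{G*_{W,k}}:
    -- injective ...
    (∀ η₁ η₂ t', Anchored.Recurrent a W outW η₁ → Anchored.Recurrent a W outW η₂ →
      Anchored.Spec a W outW η₁ D k prec t' → Anchored.Spec a W outW η₂ D k prec t' →
      ∀ v ∈ W, η₁ v = η₂ v) ∧
    -- ... and surjective onto the spanning trees of G*_{W,k}
    (∀ t', Anchored.IsSpanningTree a W outW t' →
      ∃ η', Anchored.Recurrent a W outW η' ∧
        Anchored.Spec a W outW η' D k prec t') := by
  classical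
  have hdisjW : ∀ v w, w ∈ outW v → w ∉ W := by
    intro v w hw
    rw [houtW] at hw
    by_cases hvk : v ∈ D k
    · rw [if_pos hvk] at hw
      exact (Finset.mem_sdiff.mp hw).2
    · rw [if_neg hvk] at hw
      exact absurd hw (Finset.notMem_empty w)
  have hDkparent : ∀ v ∈ W, ∀ w i, t v = some (w, i) → w ∉ W → v ∈ D k := by
    intro v hv w i hed hwW
    obtain ⟨m, u, hit, huk⟩ := (hW v).mp hv
    rcases m with _ | m
    · obtain rfl : v = u := by simpa [Anchored.iterP] using hit
      exact huk
    · exfalso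
      rw [show m + 1 = 1 + m by ring, Anchored.iterP_add, Anchored.iterP_one] at hit
      cases hp : Anchored.par Λ t v with
      | none => rw [hp] at hit; exact absurd hit (by simp)
      | some x =>
        rw [hp, Option.bind_some] at hit
        obtain ⟨ed, hed', hed1, hxΛ⟩ := Anchored.par_some hp
        rw [hed] at hed'
        obtain rfl : (w, i) = ed := by injection hed'
        have hxw : w = x := hed1
        rw [← hxw] at hit
        exact hwW ((hW w).mpr ⟨m, u, hit, huk⟩)
  constructor
  · -- (a) spanning tree
    refine ⟨fun v hv => by simp [hv], ?_, ?_⟩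
    · intro v hv
      obtain ⟨w, i, hed, hlt, hor⟩ := ht.2.1 v (hWΛ hv)
      refine ⟨w, i, ?_, hlt, ?_⟩
      · show (if v ∈ W then t v else none) = some (w, i)
        rw [if_pos hv]
        exact hed
      by_cases hwW : w ∈ W
      · exact Or.inl hwW
      · refine Or.inr ?_
        rw [houtW, if_pos (hDkparent v hv w i hed hwW)]
        rw [Finset.mem_sdiff]
        exact ⟨(hnbrs v w).mpr (by omega), hwW⟩
    · intro v hv
      set e : V → Option (V × ℕ) := fun v => if v ∈ W then t v else none with he
      have key : ∀ n (x : V), Anchored.iterP (Anchored.par Λ t) n x = none →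
          ∃ m, Anchored.iterP (Anchored.par W e) m x = none := by
        intro n
        induction n with
        | zero => intro x h; exact absurd h (by simp [Anchored.iterP])
        | succ n ih =>
          intro x h
          by_cases hx : x ∈ W
          · have hex : e x = t x := if_pos hx
            cases hp : Anchored.par Λ t x with
            | none =>
              refine ⟨1, ?_⟩
              rw [Anchored.iterP_one]
              unfold Anchored.par at hp ⊢
              rw [hex]
              cases het : t x with
              | none => simp
              | some ed =>
                rw [het] at hp
                rw [Option.bind_some] at hp ⊢
                by_cases hedΛ : ed.1 ∈ Λ
                · rw [if_pos hedΛ] at hp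
                  exact absurd hp (by simp)
                · rw [if_neg (fun hc => hedΛ (hWΛ hc))]
            | some y =>
              rw [show n + 1 = 1 + n by ring, Anchored.iterP_add, Anchored.iterP_one,
                hp, Option.bind_some] at h
              obtain ⟨ed, hed', hed1, hyΛ⟩ := Anchored.par_some hp
              by_cases hy : y ∈ W
              · have hpW : Anchored.par W e x = some y := by
                  unfold Anchored.par
                  rw [hex, hed', Option.bind_some, hed1, if_pos hy]
                obtain ⟨m, hm⟩ := ih y h
                refine ⟨m + 1, ?_⟩
                rw [show m + 1 = 1 + m by ring, Anchored.iterP_add, Anchored.iterP_one,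
                  hpW, Option.bind_some]
                exact hm
              · refine ⟨1, ?_⟩
                rw [Anchored.iterP_one]
                unfold Anchored.par
                rw [hex, hed', Option.bind_some, hed1, if_neg hy]
          · refine ⟨1, ?_⟩
            rw [Anchored.iterP_one]
            have hex : e x = none := by
              rw [he]
              exact if_neg hx
            unfold Anchored.par
            rw [hex]
            simp
      obtain ⟨n, hn⟩ := ht.2.2 v (hWΛ hv)
      exact key n v hn
  refine ⟨?_, ?_, ?_⟩
  · -- (b) consistency
    intro Λ₂ K₂ hK₂ hK₂max hkK₂ outΛ₂ houtΛ₂ η₂ t₂ hrec₂ ht₂ hspec₂ hWΛ₂ hW₂ hη₂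
    have hs1 : Anchored.Spec a W outW η D k prec (fun v => if v ∈ W then t v else none) :=
      Anchored.lemmaR a nbrs hnbrs D hmono hD0 prec Λ K outΛ houtΛ η t hrec.2 ht hspec
        k hk1 hkK W hWΛ hW outW houtW
    have hs2' : Anchored.Spec a W outW η₂ D k prec (fun v => if v ∈ W then t₂ v else none) :=
      Anchored.lemmaR a nbrs hnbrs D hmono hD0 prec Λ₂ K₂ outΛ₂ houtΛ₂ η₂ t₂ hrec₂.2 ht₂
        hspec₂ k hk1 hkK₂ W hWΛ₂ hW₂ outW houtW
    have hs2 : Anchored.Spec a W outW η D k prec (fun v => if v ∈ W then t₂ v else none) :=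
      Anchored.Spec_congr (fun v hv => hη₂ v hv) hs2'
    exact Anchored.spec_tree_unique hprec hs2 hs1
  · -- (c) injectivity
    intro η₁ η₂ t'' hr1 hr2 hsp1 hsp2
    exact Anchored.eta_eq_of_spec hD0 hmono hdisjW hr1.2 hr2.2 hsp1 hsp2
  · -- (c) surjectivity
    intro t'' ht''
    exact ⟨Anchored.etah a W outW D k prec t'',
      Anchored.recurrent_etah ht'' hD0 hmono hdisjW hprec,
      Anchored.spec_etah ht'' hD0 hmono hprec⟩
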